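/- Let B : [0,1) → ℝ be given by B(r) = M/(1-r)^α + g(r) with M > 0, 0 < α ≤ 2, g bounded measurable, and suppose inf_{r∈[0,1)} B(r) > 0. Define Φ(r) = ∫₀^r s·B(s) ds. Then there exists a constant C̃ > 0 (depending only on B) such that r·B(r) ≥ C̃·Φ(r)² for all r ∈ [0,1). -/

import Mathlib

/-!
Write `w(r) = (1 - r)^(-α)`. Since `g` is bounded and `B ≥ β > 0`, `B` is comparable to `w`
on `[0, 1)`: `c w ≤ B ≤ C w`. The function `φ(r) = r (1 - r)^(-α/2)` satisfies
`(α/2) w ≤ φ'` because `α ≤ 2`, so `Φ ≤ C ∫₀^r w ≤ (2C/α) φ`, and squaring gives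
`Φ² ≤ (2C/α)² r² w ≤ (2C/α)² r B / c`.
-/

open MeasureTheory Real Set

lemma intervalIntegral_mono_on_of_nonneg {f g : ℝ → ℝ} {a b : ℝ} (hab : a ≤ b)
    (hg : IntervalIntegrable g volume a b) (hf : ∀ x ∈ Icc a b, 0 ≤ f x)
    (hfg : ∀ x ∈ Icc a b, f x ≤ g x) :
    ∫ x in a..b, f x ≤ ∫ x in a..b, g x := by
  rw [intervalIntegral.integral_of_le hab, intervalIntegral.integral_of_le hab]
  exact integral_mono_of_nonneg
    (ae_restrict_of_forall_mem measurableSet_Ioc fun x hx => hf x (Ioc_subset_Icc_self hx))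
    hg.1
    (ae_restrict_of_forall_mem measurableSet_Ioc fun x hx => hfg x (Ioc_subset_Icc_self hx))

lemma continuousOn_one_sub_rpow (p : ℝ) {r : ℝ} (hr : r < 1) :
    ContinuousOn (fun s : ℝ => (1 - s) ^ p) (Iic r) := fun _ hs =>
  ((continuous_const.sub continuous_id).continuousAt.rpow_const
    (Or.inl (sub_ne_zero.2 (hs.trans_lt hr).ne'))).continuousWithinAt

lemma hasDerivAt_mul_one_sub_rpow_neg (a : ℝ) {s : ℝ} (hs : s < 1) :
    HasDerivAt (fun t => t * (1 - t) ^ (-a))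
      ((1 - s) ^ (-a) + s * (a * (1 - s) ^ (-a - 1))) s := by
  have h := ((hasDerivAt_id' s).const_sub 1).rpow_const (p := -a)
    (Or.inl (sub_ne_zero.2 hs.ne'))
  exact ((hasDerivAt_id' s).mul h).congr_deriv (by ring)

lemma mul_one_sub_rpow_neg_two_mul_le {a s : ℝ} (ha0 : 0 < a) (ha1 : a ≤ 1) (hs0 : 0 ≤ s)
    (hs1 : s < 1) :
    a * (1 - s) ^ (-(2 * a)) ≤ (1 - s) ^ (-a) + s * (a * (1 - s) ^ (-a - 1)) := by
  set u := 1 - s with hu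
  have hu0 : 0 < u := by linarith
  have hle : u ^ (-a) ≤ u ^ (-1 : ℝ) := rpow_le_rpow_of_exponent_ge hu0 (by linarith) (by linarith)
  have hsplit : u ^ (-(2 * a)) = u ^ (-a) * u ^ (-a) := by
    rw [← rpow_add hu0]; ring_nf
  have hsub : u ^ (-a - 1) = u ^ (-a) * u ^ (-1 : ℝ) := by
    rw [← rpow_add hu0]; ring_nf
  have hinv : u ^ (-1 : ℝ) * u = 1 := by rw [rpow_neg_one, inv_mul_cancel₀ hu0.ne']
  have hpos : 0 ≤ u ^ (-a) := rpow_nonneg hu0.le _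
  calc a * u ^ (-(2 * a)) ≤ a * (u ^ (-a) * u ^ (-1 : ℝ)) := by
        rw [hsplit]; gcongr
    _ = a * u ^ (-a) * (u ^ (-1 : ℝ) * (u + s)) := by
        rw [show u + s = 1 by linarith]; ring
    _ = a * u ^ (-a) + s * (a * u ^ (-a - 1)) := by
        rw [hsub, mul_add, hinv]; ring
    _ ≤ u ^ (-a) + s * (a * u ^ (-a - 1)) := by
        gcongr; nlinarith

lemma integral_one_sub_rpow_neg_two_mul_le {a r : ℝ} (ha0 : 0 < a) (ha1 : a ≤ 1) (hr0 : 0 ≤ r)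
    (hr1 : r < 1) :
    ∫ s in (0 : ℝ)..r, (1 - s) ^ (-(2 * a)) ≤ r * (1 - r) ^ (-a) / a := by
  have hsub : uIcc 0 r ⊆ Iic r := by rw [uIcc_of_le hr0]; exact Icc_subset_Iic_self
  have hderiv : ∀ s ∈ uIcc 0 r, HasDerivAt (fun t => t * (1 - t) ^ (-a))
      ((1 - s) ^ (-a) + s * (a * (1 - s) ^ (-a - 1))) s := fun s hs =>
    hasDerivAt_mul_one_sub_rpow_neg a ((hsub hs).trans_lt hr1)
  have hint : IntervalIntegrable (fun s => (1 - s) ^ (-a) + s * (a * (1 - s) ^ (-a - 1)))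
      volume 0 r :=
    (((continuousOn_one_sub_rpow _ hr1).add (continuousOn_id.mul
      ((continuousOn_one_sub_rpow _ hr1).const_smul a))).mono hsub).intervalIntegrable
  rw [le_div_iff₀ ha0, ← intervalIntegral.integral_mul_const]
  calc ∫ s in (0 : ℝ)..r, (1 - s) ^ (-(2 * a)) * a
      ≤ ∫ s in (0 : ℝ)..r, ((1 - s) ^ (-a) + s * (a * (1 - s) ^ (-a - 1))) := by
        refine intervalIntegral.integral_mono_on hr0
          ((((continuousOn_one_sub_rpow _ hr1).mul continuousOn_const).mono
            hsub).intervalIntegrable) hint fun s hs => ?_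
        rw [mul_comm]
        exact mul_one_sub_rpow_neg_two_mul_le ha0 ha1 hs.1 (hs.2.trans_lt hr1)
    _ = r * (1 - r) ^ (-a) := by
        rw [intervalIntegral.integral_eq_sub_of_hasDerivAt hderiv hint]; simp

lemma div_one_sub_rpow_add_le {M K α r y : ℝ} (hα : 0 ≤ α) (hr0 : 0 ≤ r) (hr1 : r < 1)
    (hK : 0 ≤ K) (hy : y ≤ K) :
    M / (1 - r) ^ α + y ≤ (M + K) * (1 - r) ^ (-α) := by
  have hw : 1 ≤ (1 - r) ^ (-α) :=
    one_le_rpow_of_pos_of_le_one_of_nonpos (by linarith) (by linarith) (by linarith)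
  rw [div_eq_mul_inv, ← rpow_neg (by linarith)]
  nlinarith

/-- The left side is a convex combination of the bounds `β ≤ b` and `x - K ≤ b`. -/
lemma div_add_mul_le_of_le_of_sub_le {β K x b : ℝ} (hβ : 0 < β) (hK : 0 ≤ K) (hβb : β ≤ b)
    (hxb : x - K ≤ b) :
    β / (β + K) * x ≤ b := by
  have hβK : 0 < β + K := by linarith
  rw [div_mul_eq_mul_div, div_le_iff₀ hβK]
  nlinarith

lemma integral_le_of_le_mul_one_sub_rpow {f : ℝ → ℝ} {C α r : ℝ} (hα0 : 0 < α) (hα2 : α ≤ 2)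
    (hC : 0 ≤ C) (hr0 : 0 ≤ r) (hr1 : r < 1) (hf0 : ∀ s ∈ Icc 0 r, 0 ≤ f s)
    (hf : ∀ s ∈ Icc 0 r, f s ≤ C * (1 - s) ^ (-α)) :
    ∫ s in (0 : ℝ)..r, f s ≤ C / (α / 2) * (r * (1 - r) ^ (-(α / 2))) := by
  have hint := (continuousOn_one_sub_rpow (-α) hr1).mono (uIcc_of_le hr0 ▸ Icc_subset_Iic_self)
  calc ∫ s in (0 : ℝ)..r, f s ≤ ∫ s in (0 : ℝ)..r, C * (1 - s) ^ (-α) :=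
        intervalIntegral_mono_on_of_nonneg hr0 (hint.intervalIntegrable.const_mul _) hf0 hf
    _ ≤ C * (r * (1 - r) ^ (-(α / 2)) / (α / 2)) := by
        rw [intervalIntegral.integral_const_mul]
        gcongr
        simpa [mul_div_cancel₀ α two_ne_zero] using
          integral_one_sub_rpow_neg_two_mul_le (a := α / 2) (by linarith) (by linarith) hr0 hr1
    _ = _ := by ring

lemma mul_sq_le_of_le_mul_one_sub_rpow {c C α r x b : ℝ} (hc : 0 ≤ c) (hC : C ≠ 0) (hr0 : 0 ≤ r)
    (hr1 : r < 1) (hx0 : 0 ≤ x) (hx : x ≤ C * (r * (1 - r) ^ (-(α / 2))))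
    (hb : c * (1 - r) ^ (-α) ≤ b) :
    c / C ^ 2 * x ^ 2 ≤ r * b := by
  have h1r : 0 < 1 - r := by linarith
  have hsq : ((1 - r) ^ (-(α / 2))) ^ 2 = (1 - r) ^ (-α) := by
    rw [← rpow_natCast, ← rpow_mul h1r.le]; norm_num
  calc c / C ^ 2 * x ^ 2 ≤ c / C ^ 2 * (C * (r * (1 - r) ^ (-(α / 2)))) ^ 2 := by gcongr
    _ = r * (r * (c * (1 - r) ^ (-α))) := by
        rw [mul_pow, mul_pow, hsq]
        field_simp
    _ ≤ r * (c * (1 - r) ^ (-α)) :=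
        mul_le_of_le_one_left (mul_nonneg hr0 (by positivity)) hr1.le
    _ ≤ r * b := mul_le_mul_of_nonneg_left hb hr0

theorem stmt_0_general (B g : ℝ → ℝ) (M α : ℝ) (hM : 0 < M) (hα0 : 0 < α) (hα2 : α ≤ 2)
    (hgbd : ∃ K, ∀ r, |g r| ≤ K)
    (hB : ∀ r ∈ Set.Ico (0:ℝ) 1, B r = M / (1 - r) ^ α + g r)
    (hinf : ∃ β > 0, ∀ r ∈ Set.Ico (0:ℝ) 1, β ≤ B r)
    (Φ : ℝ → ℝ) (hΦ : ∀ r, Φ r = ∫ s in (0:ℝ)..r, s * B s) :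
    ∃ C > 0, ∀ r ∈ Set.Ico (0:ℝ) 1, C * (Φ r) ^ 2 ≤ r * B r := by
  obtain ⟨K, hK⟩ := hgbd
  obtain ⟨β, hβ, hβB⟩ := hinf
  have hK0 : 0 ≤ K := (abs_nonneg _).trans (hK 0)
  have hB_upper : ∀ r ∈ Ico (0 : ℝ) 1, B r ≤ (M + K) * (1 - r) ^ (-α) := fun r hr => by
    rw [hB r hr]
    exact div_one_sub_rpow_add_le hα0.le hr.1 hr.2 hK0 (abs_le.1 (hK r)).2
  have hB_lower : ∀ r ∈ Ico (0 : ℝ) 1, β / (β + K) * M * (1 - r) ^ (-α) ≤ B r := fun r hr => by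
    refine mul_assoc (β / (β + K)) M _ ▸ div_add_mul_le_of_le_of_sub_le hβ hK0 (hβB r hr) ?_
    rw [hB r hr, rpow_neg (by linarith [hr.2]), ← div_eq_mul_inv]
    linarith [(abs_le.1 (hK r)).1]
  have hflux_integrand : ∀ r ∈ Ico (0 : ℝ) 1, ∀ s ∈ Icc 0 r,
      0 ≤ s * B s ∧ s * B s ≤ (M + K) * (1 - s) ^ (-α) := fun r hr s hs => by
    have hs' : s ∈ Ico (0 : ℝ) 1 := ⟨hs.1, hs.2.trans_lt hr.2⟩
    have hBs := hβ.le.trans (hβB s hs')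
    exact ⟨mul_nonneg hs.1 hBs, (mul_le_of_le_one_left hBs hs'.2.le).trans (hB_upper s hs')⟩
  refine ⟨β / (β + K) * M / ((M + K) / (α / 2)) ^ 2, by positivity, fun r hr => ?_⟩
  refine mul_sq_le_of_le_mul_one_sub_rpow (by positivity) (by positivity) hr.1 hr.2 ?_ ?_
    (hB_lower r hr)
  · exact hΦ r ▸ intervalIntegral.integral_nonneg hr.1 fun s hs => (hflux_integrand r hr s hs).1
  · exact hΦ r ▸ integral_le_of_le_mul_one_sub_rpow hα0 hα2 (by positivity) hr.1 hr.2
      (fun s hs => (hflux_integrand r hr s hs).1) fun s hs => (hflux_integrand r hr s hs).2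

/-- Lemma 3.1: for a radial magnetic field `B(r) = M/(1-r)^α + g(r)` on the unit disk
with `0 < α ≤ 2`, `M > 0`, `g` bounded measurable and `inf B > 0`, the flux
`Φ(r) = ∫₀^r s B(s) ds` satisfies `Φ'(r) = r B(r) ≥ C̃ Φ(r)²`. -/
theorem stmt_0 (B g : ℝ → ℝ) (M α : ℝ) (hM : 0 < M) (hα0 : 0 < α) (hα2 : α ≤ 2)
    (hgmeas : Measurable g) (hgbd : ∃ K, ∀ r, |g r| ≤ K)
    (hB : ∀ r ∈ Set.Ico (0:ℝ) 1, B r = M / (1 - r) ^ α + g r)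
    (hinf : ∃ β > 0, ∀ r ∈ Set.Ico (0:ℝ) 1, β ≤ B r)
    (Φ : ℝ → ℝ) (hΦ : ∀ r, Φ r = ∫ s in (0:ℝ)..r, s * B s) :
    ∃ C > 0, ∀ r ∈ Set.Ico (0:ℝ) 1, C * (Φ r) ^ 2 ≤ r * B r :=
  stmt_0_general B g M α hM hα0 hα2 hgbd hB hinf Φ hΦ
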